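/- (Corollary 1.3.1.) Let U ⊆ ℝᵐ be open, β and β₁ closed 2-form fields on U, both nondegenerate at every point, and let K : U → Matrix (Fin m) (Fin m) ℝ be a C^∞ matrix field with β₁(x)(u,v) = β(x)(K(x)u, v) for all x, u, v; set β₂(x)(u,v) = β(x)(K(x)²u, v). Let t ∈ ℝ be such that K(x) + t·1 is invertible for every x ∈ U, and define τ(x)(u,v) = β₁(x)((K(x) + t·1)⁻¹u, v). Then τ is a (C^∞, alternating) 2-form field, and for all x ∈ U and u₁, u₂, u₃ ∈ ℝᵐ: dτ(x)((K(x)+t·1)u₁, (K(x)+t·1)u₂, (K(x)+t·1)u₃) = t·β(x)(N_K(x)(u₁,u₂), u₃) = −t·dβ₂(x)(u₁,u₂,u₃). -/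

import Mathlib

open Matrix

/-- Directional derivative of a matrix field, entrywise. -/
noncomputable def matDirDeriv {d n : ℕ} (G : (Fin d → ℝ) → Matrix (Fin n) (Fin n) ℝ)
    (x w : Fin d → ℝ) : Matrix (Fin n) (Fin n) ℝ :=
  Matrix.of fun i j => fderiv ℝ (fun y => G y i j) x w

/-- The Nijenhuis torsion of a matrix field `G`. -/
noncomputable def nijenhuis {n : ℕ} (G : (Fin n → ℝ) → Matrix (Fin n) (Fin n) ℝ)
    (x u v : Fin n → ℝ) : Fin n → ℝ :=
  (matDirDeriv G x ((G x).mulVec u)).mulVec v - (matDirDeriv G x ((G x).mulVec v)).mulVec u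
    + (G x).mulVec ((matDirDeriv G x v).mulVec u) - (G x).mulVec ((matDirDeriv G x u).mulVec v)

/-- Exterior derivative of the 2-form field `(u,v) ↦ u ⬝ᵥ β(x)·v`. -/
noncomputable def form2ExtDeriv {m : ℕ} (β : (Fin m → ℝ) → Matrix (Fin m) (Fin m) ℝ)
    (x u v w : Fin m → ℝ) : ℝ :=
  v ⬝ᵥ (matDirDeriv β x u).mulVec w - u ⬝ᵥ (matDirDeriv β x v).mulVec w
    + u ⬝ᵥ (matDirDeriv β x w).mulVec v

/-- The 2-form field `τ(x)(u,v) = β₁(x)((K(x)+t·1)⁻¹u, v)`, in matrix form. -/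
noncomputable def tauField {m : ℕ} (β₁ K : (Fin m → ℝ) → Matrix (Fin m) (Fin m) ℝ) (t : ℝ) :
    (Fin m → ℝ) → Matrix (Fin m) (Fin m) ℝ :=
  fun x => ((K x + t • (1 : Matrix (Fin m) (Fin m) ℝ))⁻¹)ᵀ * β₁ x

/-! Since `β` and `β₁ = β(K·,·)` are both alternating, `K` is `β`-self-adjoint. With
`A = K + t·1`, the form `τ = β₁(A⁻¹·,·)` satisfies `τ(A·,·) = β₁` and `τ(A²·,·) = β₂ + t β₁`,
the field `A` is `τ`-self-adjoint, and `N_A = N_K`. Both identities therefore follow from one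
pointwise identity, valid for any 2-form `ω` and `ω`-self-adjoint `L` with `ω(L·,·)` alternating,
`ω(N_L(u,v),w) + dω_{L²}(u,v,w) = dω_L(u,Lv,w) - dω_L(v,Lu,w) - dω(Lu,Lv,w)`,
applied to `(β, K)` and to `(τ, A)`; it is checked by expanding both sides with the product rule. -/

namespace Matrix

variable {ι R : Type*} [Fintype ι] [CommRing R] {J A : Matrix ι ι R}

theorem dotProduct_transpose_mulVec' (M : Matrix ι ι R) (u v : ι → R) :
    u ⬝ᵥ Mᵀ *ᵥ v = M *ᵥ u ⬝ᵥ v := by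
  rw [dotProduct_mulVec, vecMul_transpose]

theorem isSelfAdjoint_of_transpose_eq_neg (hJ : Jᵀ = -J) (hAJ : (Aᵀ * J)ᵀ = -(Aᵀ * J)) :
    J.IsSelfAdjoint A := by
  rw [transpose_mul, transpose_transpose, hJ, neg_mul, neg_inj] at hAJ
  exact hAJ.symm

theorem IsSelfAdjoint.transpose_mul_eq_neg (hJ : Jᵀ = -J) (h : J.IsSelfAdjoint A) :
    (Aᵀ * J)ᵀ = -(Aᵀ * J) := by
  unfold Matrix.IsSelfAdjoint IsAdjointPair at h
  rw [Matrix.transpose_mul, transpose_transpose, hJ, h, neg_mul]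

theorem IsSelfAdjoint.transpose_mul_left (h : J.IsSelfAdjoint A) : (Aᵀ * J).IsSelfAdjoint A := by
  unfold Matrix.IsSelfAdjoint IsAdjointPair at h ⊢
  rw [mul_assoc, h]

variable [DecidableEq ι]

theorem IsSelfAdjoint.add_smul_one (h : J.IsSelfAdjoint A) (t : R) :
    J.IsSelfAdjoint (A + t • 1) := by
  unfold Matrix.IsSelfAdjoint IsAdjointPair at h ⊢
  rw [transpose_add, add_mul, mul_add, h, transpose_smul, transpose_one, smul_mul, Matrix.mul_smul,
    one_mul, mul_one]

theorem IsSelfAdjoint.nonsing_inv (h : J.IsSelfAdjoint A) : J.IsSelfAdjoint A⁻¹ := by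
  unfold Matrix.IsSelfAdjoint IsAdjointPair at h ⊢
  by_cases hA : IsUnit A.det
  · calc (A⁻¹)ᵀ * J = (A⁻¹)ᵀ * (J * A) * A⁻¹ := by
          rw [mul_assoc, mul_assoc, mul_nonsing_inv _ hA, mul_one]
      _ = J * A⁻¹ := by
          rw [← h, ← mul_assoc, ← Matrix.transpose_mul, mul_nonsing_inv _ hA, transpose_one,
            one_mul]
  · rw [nonsing_inv_apply_not_isUnit _ hA, transpose_zero, zero_mul, mul_zero]

end Matrix

section Smoothness

variable {E ι : Type*} [NormedAddCommGroup E] [NormedSpace ℝ E]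
  {n : WithTop ℕ∞} {U : Set E} {A B : E → Matrix ι ι ℝ}

theorem contDiffOn_mul_apply [Fintype ι] (hA : ∀ i j, ContDiffOn ℝ n (fun y => A y i j) U)
    (hB : ∀ i j, ContDiffOn ℝ n (fun y => B y i j) U) (i j : ι) :
    ContDiffOn ℝ n (fun y => (A y * B y) i j) U := by
  simp only [Matrix.mul_apply]
  exact ContDiffOn.sum fun k _ => (hA i k).mul (hB k j)

theorem differentiableAt_apply_of_contDiffOn (hU : IsOpen U) {x : E} (hx : x ∈ U) (hn : n ≠ 0)
    (hA : ∀ i j, ContDiffOn ℝ n (fun y => A y i j) U) (i j : ι) :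
    DifferentiableAt ℝ (fun y => A y i j) x :=
  ((hA i j).differentiableOn hn).differentiableAt (hU.mem_nhds hx)

variable [Fintype ι] [DecidableEq ι]

theorem contDiffOn_det (hA : ∀ i j, ContDiffOn ℝ n (fun y => A y i j) U) :
    ContDiffOn ℝ n (fun y => (A y).det) U := by
  simp only [Matrix.det_apply']
  exact ContDiffOn.sum fun σ _ => contDiffOn_const.mul (contDiffOn_prod fun i _ => hA (σ i) i)

theorem contDiffOn_nonsing_inv_apply (hA : ∀ i j, ContDiffOn ℝ n (fun y => A y i j) U)
    (hinv : ∀ y ∈ U, IsUnit (A y)) (i j : ι) :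
    ContDiffOn ℝ n (fun y => (A y)⁻¹ i j) U := by
  have hdet : ∀ y ∈ U, (A y).det ≠ 0 := fun y hy =>
    ((Matrix.isUnit_iff_isUnit_det _).mp (hinv y hy)).ne_zero
  have hadj : ContDiffOn ℝ n (fun y => (A y).adjugate i j) U := by
    simp only [Matrix.adjugate_apply]
    refine contDiffOn_det fun k l => ?_
    simp only [Matrix.updateRow_apply]
    split_ifs
    exacts [contDiffOn_const, hA k l]
  refine (((contDiffOn_det hA).inv hdet).mul hadj).congr fun y _ => ?_
  simp [Matrix.inv_def, Ring.inverse_eq_inv']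

theorem contDiffOn_tauField_apply {m : ℕ} {ω L : (Fin m → ℝ) → Matrix (Fin m) (Fin m) ℝ}
    {U : Set (Fin m → ℝ)} {t : ℝ} (hω : ∀ i j, ContDiffOn ℝ n (fun y => ω y i j) U)
    (hL : ∀ i j, ContDiffOn ℝ n (fun y => L y i j) U)
    (hinv : ∀ y ∈ U, IsUnit (L y + t • (1 : Matrix (Fin m) (Fin m) ℝ))) (i j : Fin m) :
    ContDiffOn ℝ n (fun y => tauField ω L t y i j) U :=
  contDiffOn_mul_apply
    (fun i j => contDiffOn_nonsing_inv_apply (fun k l => (hL k l).add contDiffOn_const) hinv j i)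
    hω i j

end Smoothness

section MatDirDeriv

variable {d n : ℕ} {F G : (Fin d → ℝ) → Matrix (Fin n) (Fin n) ℝ} {U : Set (Fin d → ℝ)}
  {x : Fin d → ℝ}

theorem matDirDeriv_congr (hU : IsOpen U) (hx : x ∈ U) (h : ∀ y ∈ U, F y = G y) :
    matDirDeriv F x = matDirDeriv G x := by
  ext w i j
  refine congrFun (congrArg DFunLike.coe (Filter.EventuallyEq.fderiv_eq ?_)) w
  filter_upwards [hU.mem_nhds hx] with y hy using by rw [h y hy]

@[simp]
theorem matDirDeriv_dir_add (w₁ w₂ : Fin d → ℝ) :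
    matDirDeriv F x (w₁ + w₂) = matDirDeriv F x w₁ + matDirDeriv F x w₂ := by
  ext i j
  simp [matDirDeriv]

@[simp]
theorem matDirDeriv_dir_smul (c : ℝ) (w : Fin d → ℝ) :
    matDirDeriv F x (c • w) = c • matDirDeriv F x w := by
  ext i j
  simp [matDirDeriv]

theorem matDirDeriv_transpose (w : Fin d → ℝ) :
    matDirDeriv (fun y => (F y)ᵀ) x w = (matDirDeriv F x w)ᵀ := rfl

theorem matDirDeriv_neg (w : Fin d → ℝ) :
    matDirDeriv (fun y => -F y) x w = -matDirDeriv F x w := by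
  ext i j
  exact congrFun (congrArg DFunLike.coe (fderiv_neg (f := fun y => F y i j))) w

theorem matDirDeriv_add_const (C : Matrix (Fin n) (Fin n) ℝ) (w : Fin d → ℝ) :
    matDirDeriv (fun y => F y + C) x w = matDirDeriv F x w := by
  ext i j
  exact congrFun (congrArg DFunLike.coe (fderiv_add_const (f := fun y => F y i j) (C i j))) w

theorem matDirDeriv_mul (hF : ∀ i j, DifferentiableAt ℝ (fun y => F y i j) x)
    (hG : ∀ i j, DifferentiableAt ℝ (fun y => G y i j) x) (w : Fin d → ℝ) :
    matDirDeriv (fun y => F y * G y) x w = matDirDeriv F x w * G x + F x * matDirDeriv G x w := by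
  ext i j
  simp only [matDirDeriv, Matrix.mul_apply, of_apply, Matrix.add_apply,
    fderiv_fun_sum (fun k _ => (hF i k).fun_mul (hG k j)), _root_.sum_apply,
    fderiv_fun_mul (hF _ _) (hG _ _), ← Finset.sum_add_distrib]
  refine Finset.sum_congr rfl fun k _ => ?_
  simp only [_root_.add_apply, _root_.smul_apply, smul_eq_mul]
  ring

theorem matDirDeriv_add_smul (hF : ∀ i j, DifferentiableAt ℝ (fun y => F y i j) x)
    (hG : ∀ i j, DifferentiableAt ℝ (fun y => G y i j) x) (c : ℝ) (w : Fin d → ℝ) :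
    matDirDeriv (fun y => F y + c • G y) x w = matDirDeriv F x w + c • matDirDeriv G x w := by
  ext i j
  simp only [matDirDeriv, of_apply, Matrix.add_apply, Matrix.smul_apply, smul_eq_mul,
    fderiv_fun_add (hF i j) ((hG i j).const_mul c), fderiv_const_mul (hG i j),
    _root_.add_apply, _root_.smul_apply]

theorem matDirDeriv_transpose_eq_neg (hU : IsOpen U) (hx : x ∈ U)
    (h : ∀ y ∈ U, (F y)ᵀ = -F y) (w : Fin d → ℝ) :
    (matDirDeriv F x w)ᵀ = -matDirDeriv F x w := by
  rw [← matDirDeriv_transpose, matDirDeriv_congr hU hx h, matDirDeriv_neg]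

end MatDirDeriv

section ExtDeriv

variable {m : ℕ} {F G ω L : (Fin m → ℝ) → Matrix (Fin m) (Fin m) ℝ} {U : Set (Fin m → ℝ)}
  {x : Fin m → ℝ}

theorem form2ExtDeriv_congr (hU : IsOpen U) (hx : x ∈ U) (h : ∀ y ∈ U, F y = G y) :
    form2ExtDeriv F x = form2ExtDeriv G x := by
  ext u v w
  simp only [form2ExtDeriv, matDirDeriv_congr hU hx h]

theorem form2ExtDeriv_add_smul (hF : ∀ i j, DifferentiableAt ℝ (fun y => F y i j) x)
    (hG : ∀ i j, DifferentiableAt ℝ (fun y => G y i j) x) (c : ℝ) (u v w : Fin m → ℝ) :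
    form2ExtDeriv (fun y => F y + c • G y) x u v w
      = form2ExtDeriv F x u v w + c * form2ExtDeriv G x u v w := by
  simp only [form2ExtDeriv, matDirDeriv_add_smul hF hG, add_mulVec, smul_mulVec, dotProduct_add,
    dotProduct_smul, smul_eq_mul]
  ring

theorem nijenhuis_add_smul_one (t : ℝ) (u v : Fin m → ℝ) :
    nijenhuis (fun y => L y + t • (1 : Matrix (Fin m) (Fin m) ℝ)) x u v = nijenhuis L x u v := by
  simp only [nijenhuis, matDirDeriv_add_const, add_mulVec, smul_mulVec, one_mulVec,
    matDirDeriv_dir_add, matDirDeriv_dir_smul]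
  module

end ExtDeriv

/-- The 2-form field `ω(L·,·)`. -/
noncomputable def formPrecomp {d n : ℕ} (ω L : (Fin d → ℝ) → Matrix (Fin n) (Fin n) ℝ) :
    (Fin d → ℝ) → Matrix (Fin n) (Fin n) ℝ :=
  fun y => (L y)ᵀ * ω y

section Nijenhuis

variable {m : ℕ} {ω L : (Fin m → ℝ) → Matrix (Fin m) (Fin m) ℝ} {U : Set (Fin m → ℝ)}
  {x : Fin m → ℝ}

theorem nijenhuis_dotProduct_mulVec_add_form2ExtDeriv
    (hω : ∀ i j, DifferentiableAt ℝ (fun y => ω y i j) x)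
    (hL : ∀ i j, DifferentiableAt ℝ (fun y => L y i j) x)
    (hsymm : (ω x).IsSelfAdjoint (L x))
    (hskew : ∀ w, (matDirDeriv (formPrecomp ω L) x w)ᵀ = -matDirDeriv (formPrecomp ω L) x w)
    (u v w : Fin m → ℝ) :
    nijenhuis L x u v ⬝ᵥ ω x *ᵥ w + form2ExtDeriv (formPrecomp ω fun y => L y * L y) x u v w
      = form2ExtDeriv (formPrecomp ω L) x u (L x *ᵥ v) w
        - form2ExtDeriv (formPrecomp ω L) x v (L x *ᵥ u) w
        - form2ExtDeriv ω x (L x *ᵥ u) (L x *ᵥ v) w := by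
  have hLL : ∀ i j, DifferentiableAt ℝ (fun y => (L y * L y)ᵀ i j) x := fun i j => by
    simp only [transpose_apply, Matrix.mul_apply]
    exact DifferentiableAt.fun_sum fun k _ => (hL j k).mul (hL k i)
  have hD : ∀ w, matDirDeriv (formPrecomp ω L) x w
      = (matDirDeriv L x w)ᵀ * ω x + (L x)ᵀ * matDirDeriv ω x w :=
    matDirDeriv_mul (fun i j => hL j i) hω
  have hDsq : ∀ w, matDirDeriv (formPrecomp ω fun y => L y * L y) x w
      = (matDirDeriv L x w * L x + L x * matDirDeriv L x w)ᵀ * ω x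
        + (L x * L x)ᵀ * matDirDeriv ω x w := fun w => by
    rw [← matDirDeriv_mul hL hL, ← matDirDeriv_transpose, ← matDirDeriv_mul hLL hω]
    rfl
  have hsymm_w : matDirDeriv L x w *ᵥ u ⬝ᵥ ω x *ᵥ (L x *ᵥ v)
      = L x *ᵥ (matDirDeriv L x w *ᵥ u) ⬝ᵥ ω x *ᵥ v := by
    rw [mulVec_mulVec, ← show (L x)ᵀ * ω x = ω x * L x from hsymm, ← mulVec_mulVec,
      dotProduct_transpose_mulVec']
  have hskew_w : L x *ᵥ u ⬝ᵥ matDirDeriv (formPrecomp ω L) x w *ᵥ v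
      = -(v ⬝ᵥ matDirDeriv (formPrecomp ω L) x w *ᵥ (L x *ᵥ u)) := by
    rw [← dotProduct_transpose_mulVec, hskew, neg_mulVec, dotProduct_neg]
  simp only [form2ExtDeriv, nijenhuis, hD, hDsq] at hsymm_w hskew_w ⊢
  simp only [Matrix.transpose_mul, transpose_add, ← mulVec_mulVec, dotProduct_transpose_mulVec',
    add_mulVec, add_dotProduct, dotProduct_add, sub_dotProduct]
    at hsymm_w hskew_w ⊢
  linear_combination hskew_w - hsymm_w

theorem nijenhuis_dotProduct_mulVec_eq_neg_form2ExtDeriv (hU : IsOpen U) (hx : x ∈ U)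
    (hω : ∀ i j, DifferentiableAt ℝ (fun y => ω y i j) x)
    (hL : ∀ i j, DifferentiableAt ℝ (fun y => L y i j) x)
    (hωalt : (ω x)ᵀ = -ω x) (hωLalt : ∀ y ∈ U, (formPrecomp ω L y)ᵀ = -formPrecomp ω L y)
    (hωcl : ∀ u v w, form2ExtDeriv ω x u v w = 0)
    (hωLcl : ∀ u v w, form2ExtDeriv (formPrecomp ω L) x u v w = 0) (u v w : Fin m → ℝ) :
    nijenhuis L x u v ⬝ᵥ ω x *ᵥ w = -form2ExtDeriv (formPrecomp ω fun y => L y * L y) x u v w := by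
  have h := nijenhuis_dotProduct_mulVec_add_form2ExtDeriv hω hL
    (isSelfAdjoint_of_transpose_eq_neg hωalt (hωLalt x hx))
    (matDirDeriv_transpose_eq_neg hU hx hωLalt) u v w
  rw [hωcl, hωLcl, hωLcl] at h
  linarith

end Nijenhuis

section TauField

variable {m : ℕ} {ω L : (Fin m → ℝ) → Matrix (Fin m) (Fin m) ℝ} {t : ℝ} {y : Fin m → ℝ}

theorem transpose_mul_tauField (h : IsUnit (L y + t • (1 : Matrix (Fin m) (Fin m) ℝ))) :
    (L y + t • (1 : Matrix (Fin m) (Fin m) ℝ))ᵀ * tauField ω L t y = ω y := by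
  rw [tauField, ← mul_assoc, ← Matrix.transpose_mul,
    nonsing_inv_mul _ ((isUnit_iff_isUnit_det _).mp h), transpose_one, one_mul]

theorem transpose_mul_self_mul_tauField_formPrecomp
    (h : IsUnit (L y + t • (1 : Matrix (Fin m) (Fin m) ℝ))) :
    ((L y + t • (1 : Matrix (Fin m) (Fin m) ℝ)) * (L y + t • 1))ᵀ
        * tauField (formPrecomp ω L) L t y
      = (L y * L y)ᵀ * ω y + t • ((L y)ᵀ * ω y) := by
  rw [Matrix.transpose_mul, mul_assoc, transpose_mul_tauField h, formPrecomp, transpose_add,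
    transpose_smul, transpose_one, add_mul, smul_mul, one_mul, Matrix.transpose_mul, mul_assoc]

theorem transpose_tauField (hω : (ω y)ᵀ = -ω y) (hsa : (ω y).IsSelfAdjoint (L y)) :
    (tauField ω L t y)ᵀ = -tauField ω L t y :=
  ((hsa.add_smul_one t).nonsing_inv).transpose_mul_eq_neg hω

end TauField

theorem form2ExtDeriv_tauField_formPrecomp {m : ℕ} {ω L : (Fin m → ℝ) → Matrix (Fin m) (Fin m) ℝ}
    {U : Set (Fin m → ℝ)} (hU : IsOpen U) {t : ℝ} {x : Fin m → ℝ} (hx : x ∈ U)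
    {n : WithTop ℕ∞} (hn : n ≠ 0) (hω : ∀ i j, ContDiffOn ℝ n (fun y => ω y i j) U)
    (hL : ∀ i j, ContDiffOn ℝ n (fun y => L y i j) U)
    (hωalt : ∀ y ∈ U, (ω y)ᵀ = -ω y) (hωLalt : ∀ y ∈ U, (formPrecomp ω L y)ᵀ = -formPrecomp ω L y)
    (hωcl : ∀ u v w, form2ExtDeriv ω x u v w = 0)
    (hωLcl : ∀ u v w, form2ExtDeriv (formPrecomp ω L) x u v w = 0)
    (hinv : ∀ y ∈ U, IsUnit (L y + t • (1 : Matrix (Fin m) (Fin m) ℝ))) (u v w : Fin m → ℝ) :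
    form2ExtDeriv (tauField (formPrecomp ω L) L t) x
        ((L x + t • (1 : Matrix (Fin m) (Fin m) ℝ)) *ᵥ u)
        ((L x + t • (1 : Matrix (Fin m) (Fin m) ℝ)) *ᵥ v)
        ((L x + t • (1 : Matrix (Fin m) (Fin m) ℝ)) *ᵥ w)
      = t * (nijenhuis L x u v ⬝ᵥ ω x *ᵥ w) := by
  set A : (Fin m → ℝ) → Matrix (Fin m) (Fin m) ℝ := fun y => L y + t • 1 with hA
  set τ := tauField (formPrecomp ω L) L t
  have hdiff {F : (Fin m → ℝ) → Matrix (Fin m) (Fin m) ℝ}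
      (hF : ∀ i j, ContDiffOn ℝ n (fun y => F y i j) U) :=
    differentiableAt_apply_of_contDiffOn hU hx hn hF
  have hAs : ∀ i j, ContDiffOn ℝ n (fun y => A y i j) U := fun i j =>
    (hL i j).add contDiffOn_const
  have hωLs : ∀ i j, ContDiffOn ℝ n (fun y => formPrecomp ω L y i j) U :=
    contDiffOn_mul_apply (fun i j => hL j i) hω
  have hωLLs : ∀ i j, ContDiffOn ℝ n (fun y => formPrecomp ω (fun y => L y * L y) y i j) U :=
    contDiffOn_mul_apply (fun i j => contDiffOn_mul_apply hL hL j i) hω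
  have hτs : ∀ i j, ContDiffOn ℝ n (fun y => τ y i j) U := contDiffOn_tauField_apply hωLs hL hinv
  have hsa : ∀ y ∈ U, (ω y).IsSelfAdjoint (L y) := fun y hy =>
    isSelfAdjoint_of_transpose_eq_neg (hωalt y hy) (hωLalt y hy)
  have hτA : ∀ y ∈ U, formPrecomp τ A y = formPrecomp ω L y := fun y hy =>
    transpose_mul_tauField (hinv y hy)
  have hτAA : ∀ y ∈ U, formPrecomp τ (fun y => A y * A y) y
      = formPrecomp ω (fun y => L y * L y) y + t • formPrecomp ω L y := fun y hy =>
    transpose_mul_self_mul_tauField_formPrecomp (hinv y hy)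
  have hτAalt : ∀ y ∈ U, (formPrecomp τ A y)ᵀ = -formPrecomp τ A y := fun y hy => by
    rw [hτA y hy, hωLalt y hy]
  have hτsa : (τ x).IsSelfAdjoint (A x) := isSelfAdjoint_of_transpose_eq_neg
    (transpose_tauField (hωLalt x hx) (hsa x hx).transpose_mul_left) (hτAalt x hx)
  have hτ_mul : τ x * A x = formPrecomp ω L x := (hτsa : (A x)ᵀ * τ x = _) ▸ hτA x hx
  have hω_mul : ω x * A x = formPrecomp ω L x + t • ω x := by
    rw [hA, mul_add, Matrix.mul_smul, mul_one, formPrecomp, (hsa x hx : (L x)ᵀ * ω x = _)]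
  have key := nijenhuis_dotProduct_mulVec_add_form2ExtDeriv (hdiff hτs) (hdiff hAs) hτsa
    (matDirDeriv_transpose_eq_neg hU hx hτAalt) u v (A x *ᵥ w)
  have hN := nijenhuis_dotProduct_mulVec_eq_neg_form2ExtDeriv hU hx (hdiff hω) (hdiff hL)
    (hωalt x hx) hωLalt hωcl hωLcl u v (A x *ᵥ w)
  rw [nijenhuis_add_smul_one, form2ExtDeriv_congr hU hx hτA, form2ExtDeriv_congr hU hx hτAA,
    form2ExtDeriv_add_smul (hdiff hωLLs) (hdiff hωLs), hωLcl, hωLcl, hωLcl, mulVec_mulVec,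
    hτ_mul] at key
  rw [mulVec_mulVec, hω_mul, add_mulVec, smul_mulVec, dotProduct_add, dotProduct_smul,
    smul_eq_mul] at hN
  change form2ExtDeriv τ x (A x *ᵥ u) (A x *ᵥ v) (A x *ᵥ w) = _
  linear_combination key - hN

theorem corollary_1_3_1_general {m : ℕ} (U : Set (Fin m → ℝ)) (hU : IsOpen U)
    (β β₁ K : (Fin m → ℝ) → Matrix (Fin m) (Fin m) ℝ) (t : ℝ)
    (hβs : ∀ i j, ContDiffOn ℝ (⊤ : ℕ∞) (fun x => β x i j) U)
    (hβ₁s : ∀ i j, ContDiffOn ℝ (⊤ : ℕ∞) (fun x => β₁ x i j) U)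
    (hKs : ∀ i j, ContDiffOn ℝ (⊤ : ℕ∞) (fun x => K x i j) U)
    (hβalt : ∀ x ∈ U, (β x)ᵀ = -β x)
    (hβ₁alt : ∀ x ∈ U, (β₁ x)ᵀ = -β₁ x)
    (hβcl : ∀ x ∈ U, ∀ u v w : Fin m → ℝ, form2ExtDeriv β x u v w = 0)
    (hβ₁cl : ∀ x ∈ U, ∀ u v w : Fin m → ℝ, form2ExtDeriv β₁ x u v w = 0)
    (hrel : ∀ x ∈ U, ∀ u v : Fin m → ℝ,
      u ⬝ᵥ (β₁ x).mulVec v = ((K x).mulVec u) ⬝ᵥ (β x).mulVec v)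
    (hinv : ∀ x ∈ U, IsUnit (K x + t • (1 : Matrix (Fin m) (Fin m) ℝ))) :
    (∀ i j, ContDiffOn ℝ (⊤ : ℕ∞) (fun x => tauField β₁ K t x i j) U) ∧
    (∀ x ∈ U, (tauField β₁ K t x)ᵀ = -tauField β₁ K t x) ∧
    ∀ x ∈ U, ∀ u₁ u₂ u₃ : Fin m → ℝ,
      form2ExtDeriv (tauField β₁ K t) x
          ((K x + t • (1 : Matrix (Fin m) (Fin m) ℝ)).mulVec u₁)
          ((K x + t • (1 : Matrix (Fin m) (Fin m) ℝ)).mulVec u₂)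
          ((K x + t • (1 : Matrix (Fin m) (Fin m) ℝ)).mulVec u₃)
        = t * ((nijenhuis K x u₁ u₂) ⬝ᵥ (β x).mulVec u₃) ∧
      t * ((nijenhuis K x u₁ u₂) ⬝ᵥ (β x).mulVec u₃)
        = -t * form2ExtDeriv (fun y => (K y * K y)ᵀ * β y) x u₁ u₂ u₃ := by
  have hβ₁ : ∀ y ∈ U, β₁ y = formPrecomp β K y := fun y hy =>
    ext_iff_mulVec.2 fun v => dotProduct_eq _ _ fun u => by
      rw [dotProduct_comm, hrel y hy, dotProduct_comm _ u, formPrecomp, ← mulVec_mulVec,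
        dotProduct_transpose_mulVec']
  have hβ₁alt' : ∀ y ∈ U, (formPrecomp β K y)ᵀ = -formPrecomp β K y := fun y hy =>
    hβ₁ y hy ▸ hβ₁alt y hy
  have hβ₁cl' : ∀ x ∈ U, ∀ u v w, form2ExtDeriv (formPrecomp β K) x u v w = 0 := fun x hx =>
    form2ExtDeriv_congr hU hx hβ₁ ▸ hβ₁cl x hx
  refine ⟨contDiffOn_tauField_apply hβ₁s hKs hinv,
    fun x hx => transpose_tauField (hβ₁alt x hx) (hβ₁ x hx ▸ (isSelfAdjoint_of_transpose_eq_neg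
      (hβalt x hx) (hβ₁alt' x hx)).transpose_mul_left),
    fun x hx u₁ u₂ u₃ => ⟨?_, ?_⟩⟩
  · rw [form2ExtDeriv_congr hU hx (G := tauField (formPrecomp β K) K t) fun y hy => by
      simp only [tauField, hβ₁ y hy]]
    exact form2ExtDeriv_tauField_formPrecomp hU hx (by simp) hβs hKs hβalt hβ₁alt' (hβcl x hx)
      (hβ₁cl' x hx) hinv u₁ u₂ u₃
  · rw [nijenhuis_dotProduct_mulVec_eq_neg_form2ExtDeriv hU hx
      (differentiableAt_apply_of_contDiffOn hU hx (by simp) hβs)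
      (differentiableAt_apply_of_contDiffOn hU hx (by simp) hKs) (hβalt x hx) hβ₁alt' (hβcl x hx)
      (hβ₁cl' x hx), mul_neg, neg_mul]
    rfl

/-- Corollary 1.3.1: with `β`, `β₁` closed symplectic 2-form fields, `β₁ = β(K·,·)`,
`β₂ = β(K²·,·)` and `K + t·1` invertible, the 2-form `τ = β₁((K+tI)⁻¹·,·)` satisfies
`dτ((K+tI)u₁,(K+tI)u₂,(K+tI)u₃) = t·β(N_K(u₁,u₂),u₃) = −t·dβ₂(u₁,u₂,u₃)`. -/
theorem corollary_1_3_1 {m : ℕ} (U : Set (Fin m → ℝ)) (hU : IsOpen U)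
    (β β₁ K : (Fin m → ℝ) → Matrix (Fin m) (Fin m) ℝ) (t : ℝ)
    (hβs : ∀ i j, ContDiffOn ℝ (⊤ : ℕ∞) (fun x => β x i j) U)
    (hβ₁s : ∀ i j, ContDiffOn ℝ (⊤ : ℕ∞) (fun x => β₁ x i j) U)
    (hKs : ∀ i j, ContDiffOn ℝ (⊤ : ℕ∞) (fun x => K x i j) U)
    (hβalt : ∀ x ∈ U, (β x)ᵀ = -β x)
    (hβ₁alt : ∀ x ∈ U, (β₁ x)ᵀ = -β₁ x)
    (hβnd : ∀ x ∈ U, ∀ u : Fin m → ℝ, (∀ v, u ⬝ᵥ (β x).mulVec v = 0) → u = 0)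
    (hβ₁nd : ∀ x ∈ U, ∀ u : Fin m → ℝ, (∀ v, u ⬝ᵥ (β₁ x).mulVec v = 0) → u = 0)
    (hβcl : ∀ x ∈ U, ∀ u v w : Fin m → ℝ, form2ExtDeriv β x u v w = 0)
    (hβ₁cl : ∀ x ∈ U, ∀ u v w : Fin m → ℝ, form2ExtDeriv β₁ x u v w = 0)
    (hrel : ∀ x ∈ U, ∀ u v : Fin m → ℝ,
      u ⬝ᵥ (β₁ x).mulVec v = ((K x).mulVec u) ⬝ᵥ (β x).mulVec v)
    (hinv : ∀ x ∈ U, IsUnit (K x + t • (1 : Matrix (Fin m) (Fin m) ℝ))) :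
    (∀ i j, ContDiffOn ℝ (⊤ : ℕ∞) (fun x => tauField β₁ K t x i j) U) ∧
    (∀ x ∈ U, (tauField β₁ K t x)ᵀ = -tauField β₁ K t x) ∧
    ∀ x ∈ U, ∀ u₁ u₂ u₃ : Fin m → ℝ,
      form2ExtDeriv (tauField β₁ K t) x
          ((K x + t • (1 : Matrix (Fin m) (Fin m) ℝ)).mulVec u₁)
          ((K x + t • (1 : Matrix (Fin m) (Fin m) ℝ)).mulVec u₂)
          ((K x + t • (1 : Matrix (Fin m) (Fin m) ℝ)).mulVec u₃)
        = t * ((nijenhuis K x u₁ u₂) ⬝ᵥ (β x).mulVec u₃) ∧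
      t * ((nijenhuis K x u₁ u₂) ⬝ᵥ (β x).mulVec u₃)
        = -t * form2ExtDeriv (fun y => (K y * K y)ᵀ * β y) x u₁ u₂ u₃ :=
  corollary_1_3_1_general U hU β β₁ K t hβs hβ₁s hKs hβalt hβ₁alt hβcl hβ₁cl hrel hinv
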